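/- Let V be a 4-dimensional oriented real inner product space and W a real inner product space. Write Λ²₊V* and Λ²₋V* for the self-dual and anti-self-dual 2-forms. Suppose F ∈ Λ²₋V* ⊗ W and φ ∈ Λ²₊V* ⊗ W satisfy ⟨r*F, φ⟩ = 0 for every r ∈ gl(V) = End(V), where r*F denotes the induced action of r on the 2-form part of F and ⟨·,·⟩ is the inner product on Λ²V* ⊗ W. Then, viewing F ∈ Hom(Λ²₋V*, W) and φ ∈ Hom(Λ²₊V*, W) via the inner product, the images of F and φ are orthogonal subspaces of W. -/

import Mathlib

open scoped BigOperators

/-- The Levi-Civita symbol on `Fin 4`: the sign of `v` if it is a permutation,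
and `0` otherwise. -/
noncomputable def leviCivita (v : Fin 4 → Fin 4) : ℝ :=
  if h : Function.Bijective v then ((Equiv.Perm.sign (Equiv.ofBijective v h) : ℤ) : ℝ)
  else 0

/-- The Hodge star operator on `W`-valued 2-forms on `ℝ⁴` (with the standard
orthonormal oriented basis), `(*ω)ᵢⱼ = (1/2) ∑ εᵢⱼₖₗ ωₖₗ`. -/
noncomputable def hodgeStar {W : Type*} [AddCommGroup W] [Module ℝ W]
    (ω : Fin 4 → Fin 4 → W) : Fin 4 → Fin 4 → W :=
  fun i j => (2 : ℝ)⁻¹ • ∑ k, ∑ l, leviCivita ![i, j, k, l] • ω k l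

/-- The infinitesimal action of `r ∈ gl(V)` on a `W`-valued 2-form:
`(r*ω)(x, y) = ω(rx, y) + ω(x, ry)`, in coordinates. -/
def glAction {W : Type*} [AddCommGroup W] [Module ℝ W]
    (r : Matrix (Fin 4) (Fin 4) ℝ) (ω : Fin 4 → Fin 4 → W) : Fin 4 → Fin 4 → W :=
  fun i j => (∑ k, r k i • ω k j) + (∑ k, r k j • ω i k)

/-!
Taking `r` to be an elementary matrix `E_ab`, the hypothesis says exactly that the contraction
`M_ab = ∑ⱼ ⟨F_aj, φ_bj⟩` vanishes. An (anti-)self-dual alternating form is determined by its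
entries `ω₀₁, ω₀₂, ω₀₃`, which therefore span its image, and in these coordinates the entries of
`M` are sums and differences of the nine pairings `⟨F₀ₘ, φ₀ₙ⟩`; solving, all nine vanish.
-/

section HodgeStar

variable {W : Type*} [AddCommGroup W] [Module ℝ W] {ω : Fin 4 → Fin 4 → W}

lemma leviCivita_eq_zero {v : Fin 4 → Fin 4} (hv : ¬Function.Injective v) : leviCivita v = 0 :=
  dif_neg fun h => hv h.1

lemma leviCivita_eq_one {v : Fin 4 → Fin 4} (hv : Function.Bijective v)
    (hs : Equiv.Perm.sign (Equiv.ofBijective v hv) = 1) : leviCivita v = 1 := by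
  rw [leviCivita, dif_pos hv, hs]; norm_num

lemma leviCivita_eq_neg_one {v : Fin 4 → Fin 4} (hv : Function.Bijective v)
    (hs : Equiv.Perm.sign (Equiv.ofBijective v hv) = -1) : leviCivita v = -1 := by
  rw [leviCivita, dif_pos hv, hs]; norm_num

lemma hodgeStar_zero_row (hω : ∀ i j, ω i j = -ω j i) :
    hodgeStar ω 0 1 = ω 2 3 ∧ hodgeStar ω 0 2 = ω 3 1 ∧ hodgeStar ω 0 3 = ω 1 2 := by
  refine ⟨?_, ?_, ?_⟩ <;>
    simp (disch := decide) only [hodgeStar, Fin.sum_univ_four, leviCivita_eq_zero,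
      leviCivita_eq_one, leviCivita_eq_neg_one, zero_smul, add_zero, zero_add, one_smul,
      neg_one_smul]
  · rw [hω 3 2]; module
  · rw [hω 1 3]; module
  · rw [hω 2 1]; module

/-- The alternating form with `ω 0 1 = a`, `ω 0 2 = b`, `ω 0 3 = c` and `⋆ω = s • ω`. -/
def hodgeEigenform (s : ℝ) (a b c : W) : Fin 4 → Fin 4 → W :=
  ![![0, a, b, c], ![-a, 0, s • c, -(s • b)], ![-b, -(s • c), 0, s • a],
    ![-c, s • b, -(s • a), 0]]

lemma eq_hodgeEigenform {s : ℝ} (hω : ∀ i j, ω i j = -ω j i)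
    (hs : ∀ i j, hodgeStar ω i j = s • ω i j) :
    ω = hodgeEigenform s (ω 0 1) (ω 0 2) (ω 0 3) := by
  obtain ⟨h01, h02, h03⟩ := hodgeStar_zero_row hω
  have h23 : ω 2 3 = s • ω 0 1 := h01 ▸ hs 0 1
  have h31 : ω 3 1 = s • ω 0 2 := h02 ▸ hs 0 2
  have h12 : ω 1 2 = s • ω 0 3 := h03 ▸ hs 0 3
  have hdiag : ∀ i, ω i i = 0 := fun i => by
    linear_combination (norm := module) (2⁻¹ : ℝ) • hω i i
  ext i j
  fin_cases i <;> fin_cases j <;>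
    simp [hodgeEigenform, hdiag, h23, h31, h12, hω 1 0, hω 2 0, hω 3 0, hω 1 3, hω 2 1, hω 3 2]

lemma hodgeEigenform_mem_span (s : ℝ) (a b c : W) (i j : Fin 4) :
    hodgeEigenform s a b c i j ∈ Submodule.span ℝ {a, b, c} := by
  have ha : a ∈ Submodule.span ℝ {a, b, c} := Submodule.subset_span (by simp)
  have hb : b ∈ Submodule.span ℝ {a, b, c} := Submodule.subset_span (by simp)
  have hc : c ∈ Submodule.span ℝ {a, b, c} := Submodule.subset_span (by simp)
  fin_cases i <;> fin_cases j <;> simp [hodgeEigenform, Submodule.smul_mem, ha, hb, hc]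

end HodgeStar

section InnerProduct

variable {W : Type*} [NormedAddCommGroup W] [InnerProductSpace ℝ W]

lemma sum_inner_glAction_single {F φ : Fin 4 → Fin 4 → W}
    (hF : ∀ i j, F i j = -F j i) (hφ : ∀ i j, φ i j = -φ j i) (a b : Fin 4) :
    ∑ i, ∑ j, (inner ℝ (glAction (Matrix.single a b 1) F i j) (φ i j) : ℝ) =
      2 * ∑ j, (inner ℝ (F a j) (φ b j) : ℝ) := by
  have hglAction : ∀ i j, glAction (Matrix.single a b 1) F i j =
      (if i = b then F a j else 0) + (if j = b then F i a else 0) := by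
    intro i j
    simp [glAction, Matrix.single_apply, ite_and, eq_comm]
  have hite : ∀ (p : Prop) [Decidable p] (x y : W),
      (inner ℝ (if p then x else 0) y : ℝ) = if p then inner ℝ x y else 0 := by
    intros; split_ifs <;> simp
  have hswap : ∀ i, (inner ℝ (F i a) (φ i b) : ℝ) = inner ℝ (F a i) (φ b i) := fun i => by
    rw [hF, hφ, inner_neg_neg]
  simp only [hglAction, inner_add_left, Finset.sum_add_distrib, hite, ← Finset.ite_sum_zero,
    Finset.sum_ite_eq', Finset.mem_univ, if_true, hswap]
  ring

/-- The contractions at `(i, k) = (0, 0), (1, 1), (2, 2)` are `⟨a, p⟩ + ⟨b, q⟩ + ⟨c, r⟩` and two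
of its versions with two signs flipped; those at `(0, 1), (2, 3)` are `⟨b, r⟩ ∓ ⟨c, q⟩`, and
cyclically. -/
lemma hodgeEigenform_span_isOrtho {a b c p q r : W}
    (h : ∀ i k, ∑ j, (inner ℝ (hodgeEigenform (-1) a b c i j)
      (hodgeEigenform 1 p q r k j) : ℝ) = 0) :
    Submodule.span ℝ {a, b, c} ⟂ Submodule.span ℝ {p, q, r} := by
  have h00 := h 0 0
  have h11 := h 1 1
  have h22 := h 2 2
  have h01 := h 0 1
  have h23 := h 2 3
  have h02 := h 0 2
  have h13 := h 1 3
  have h03 := h 0 3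
  have h12 := h 1 2
  simp [Fin.sum_univ_four, hodgeEigenform, inner_neg_left, inner_neg_right]
    at h00 h11 h22 h01 h23 h02 h13 h03 h12
  rw [Submodule.isOrtho_span]
  rintro u (rfl | rfl | rfl) v (rfl | rfl | rfl) <;> linarith

end InnerProduct

/-- Freed–Uhlenbeck orthogonality lemma: if an anti-self-dual `W`-valued 2-form `F` and
a self-dual `W`-valued 2-form `φ` on an oriented 4-dimensional inner product space
satisfy `⟨r*F, φ⟩ = 0` for every `r ∈ gl(V)`, then the images of `F` and `φ`
(viewed as maps `Λ²∓V* → W`) are orthogonal subspaces of `W`. -/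
theorem stmt_11 {W : Type*} [NormedAddCommGroup W] [InnerProductSpace ℝ W]
    (F φ : Fin 4 → Fin 4 → W)
    (hFalt : ∀ i j, F i j = -F j i) (hφalt : ∀ i j, φ i j = -φ j i)
    (hFasd : ∀ i j, hodgeStar F i j = -F i j)
    (hφsd : ∀ i j, hodgeStar φ i j = φ i j)
    (horth : ∀ r : Matrix (Fin 4) (Fin 4) ℝ,
      ∑ i, ∑ j, (inner ℝ (glAction r F i j) (φ i j) : ℝ) = 0) :
    ∀ i j k l, (inner ℝ (F i j) (φ k l) : ℝ) = 0 := by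
  have hF := eq_hodgeEigenform (s := -1) hFalt (by simpa using hFasd)
  have hφ := eq_hodgeEigenform (s := 1) hφalt (by simpa using hφsd)
  have hcontraction : ∀ a b, ∑ j, (inner ℝ (F a j) (φ b j) : ℝ) = 0 := fun a b => by
    have := horth (Matrix.single a b 1)
    rw [sum_inner_glAction_single hFalt hφalt] at this
    linarith
  rw [hF, hφ] at hcontraction
  intro i j k l
  rw [hF, hφ]
  exact (hodgeEigenform_span_isOrtho hcontraction).inner_eq
    (hodgeEigenform_mem_span _ _ _ _ i j) (hodgeEigenform_mem_span _ _ _ _ k l)
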